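/- Let a_1 < ... < a_n be positive integers with a_i ≤ 2i - 1, and p ≥ 0 an integer. Then det( binom(p + i - 1, a_i - j) )_{1≤i,j≤n} is strictly positive; it counts column-strict and row-strict fillings of the Young diagram Y(a) with entries at most p + n - 1. -/

import Mathlib

/-!
Expanding the determinant, `det = ∑ σ, sign σ * #{path families for σ}`, where path `i` is a
lattice path from `(0, σ i)` to `(p + i, a i - 1)`: its up-steps form a subset of
`{0, …, p + i - 1}` of size `a i - σ i - 1`, counted by the entry `binom(p + i, a i - σ i - 1)`.
Exchanging the beginnings of the first two paths to meet, up to their first meeting time, is a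
sign-reversing involution on the intersecting families (Lindström–Gessel–Viennot), and as `a` is
strictly increasing every family with `σ ≠ 1` intersects. So the determinant counts the
nonintersecting families for `σ = 1`. Reading the up-step times of path `i`, raised by `n - i`, as
row `n - 1 - i` of a filling turns non-intersection of consecutive paths into strict increase down
the columns. Filling cell `(x, y)` by `x + y + 1` shows that there is at least one tableau.
-/

/-- Totalization of a sequence `a : Fin n → ℕ` to `ℕ → ℕ` (value `0` out of range). -/
def extSeq (n : ℕ) (a : Fin n → ℕ) : ℕ → ℕ := fun m => if h : m < n then a ⟨m, h⟩ else 0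

/-- The Young diagram `Y(a)` associated to a sequence `a₁ < ⋯ < aₙ`:
its `(n+1-i)`-th row from the top has `aᵢ - i` boxes. Rows and columns are 0-indexed. -/
def cellsOf (n : ℕ) (a : Fin n → ℕ) : Finset (ℕ × ℕ) :=
  ((Finset.range n) ×ˢ (Finset.range (2 * n))).filter fun u =>
    u.2 < extSeq n a (n - 1 - u.1) - (n - u.1)

open Finset Equiv

namespace Finset

variable {A B : Finset ℕ} {y : ℕ}

lemma count_mem_eq_card {t : ℕ} (h : ∀ x ∈ A, x < t) :
    Nat.count (· ∈ A) t = #A := by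
  rw [Nat.count_eq_card_filter_range]
  congr 1
  ext x
  simpa using fun hx => h x hx

lemma card_le_count_mem_add {L : ℕ} (hA : A ⊆ range L) (t : ℕ) :
    #A ≤ Nat.count (· ∈ A) t + (L - t) :=
  calc #A = Nat.count (· ∈ A) L := (count_mem_eq_card fun x hx => mem_range.mp (hA hx)).symm
    _ ≤ Nat.count (· ∈ A) (t + (L - t)) := Nat.count_monotone _ (by omega)
    _ ≤ Nat.count (· ∈ A) t + (L - t) := by rw [Nat.count_add]; gcongr; exact Nat.count_le _

lemma card_filter_lt_eq_count (A : Finset ℕ) (t : ℕ) :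
    #(A.filter (· < t)) = Nat.count (· ∈ A) t := by
  rw [Nat.count_eq_card_filter_range]
  congr 1
  ext x
  simp [and_comm]

lemma nth_mem_of_lt_card (hy : y < #A) : Nat.nth (· ∈ A) y ∈ A :=
  Nat.nth_mem_of_lt_card A.finite_toSet (by simpa using hy)

lemma nth_lt_nth_of_lt_card {z : ℕ} (hyz : y < z) (hz : z < #A) :
    Nat.nth (· ∈ A) y < Nat.nth (· ∈ A) z :=
  Nat.nth_lt_nth_of_lt_card A.finite_toSet hyz (by simpa using hz)

lemma count_nth_of_lt_card (hy : y < #A) : Nat.count (· ∈ A) (Nat.nth (· ∈ A) y) = y :=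
  Nat.count_nth_of_lt_card_finite A.finite_toSet (by simpa using hy)

lemma count_le_card (t : ℕ) : Nat.count (· ∈ A) t ≤ #A :=
  card_filter_lt_eq_count A t ▸ card_filter_le _ _

lemma strictMonoOn_nth : StrictMonoOn (Nat.nth (· ∈ A)) (Set.Iio #A) :=
  fun _ _ _ hz hyz => nth_lt_nth_of_lt_card hyz hz

lemma image_nth_range_card : (range #A).image (Nat.nth (· ∈ A)) = A := by
  refine eq_of_subset_of_card_le (image_subset_iff.mpr fun y hy => ?_) ?_
  · exact nth_mem_of_lt_card (mem_range.mp hy)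
  · rw [card_image_of_injOn (by simpa only [coe_range] using strictMonoOn_nth.injOn), card_range]

lemma nth_image_range {g : ℕ → ℕ} {b : ℕ} (hg : StrictMonoOn g (Set.Iio b)) (hy : y < b) :
    Nat.nth (· ∈ (range b).image g) y = g y := by
  have hfilter : (range (g y)).filter (· ∈ (range b).image g) = (range y).image g := by
    ext x
    simp only [mem_filter, mem_range, mem_image]
    constructor
    · rintro ⟨hx, z, hz, rfl⟩
      exact ⟨z, (hg.lt_iff_lt hz hy).mp hx, rfl⟩
    · rintro ⟨z, hz, rfl⟩
      exact ⟨hg (hz.trans hy) hy hz, z, hz.trans hy, rfl⟩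
  have hcount : Nat.count (· ∈ (range b).image g) (g y) = y := by
    rw [Nat.count_eq_card_filter_range, hfilter,
      card_image_of_injOn (hg.injOn.mono fun z hz => (mem_range.mp hz).trans hy), card_range]
  have := Nat.nth_count (p := (· ∈ (range b).image g)) (mem_image_of_mem g (mem_range.mpr hy))
  rwa [hcount] at this

lemma nth_le_nth_of_count_le {L : ℕ} (hA : A ⊆ range L)
    (h : ∀ t ≤ L, Nat.count (· ∈ A) t ≤ Nat.count (· ∈ B) t) (hy : y < #A) :
    Nat.nth (· ∈ B) y ≤ Nat.nth (· ∈ A) y := by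
  have hmem := nth_mem_of_lt_card hy
  have hcount := h _ (mem_range.mp (hA hmem))
  rw [Nat.count_succ, count_nth_of_lt_card hy, if_pos hmem] at hcount
  exact Nat.lt_succ_iff.mp (Nat.nth_lt_of_lt_count hcount)

lemma count_le_count_of_nth_le_nth (hcard : #A ≤ #B)
    (h : ∀ y < #A, Nat.nth (· ∈ B) y ≤ Nat.nth (· ∈ A) y) (t : ℕ) :
    Nat.count (· ∈ A) t ≤ Nat.count (· ∈ B) t := by
  by_contra! hlt
  set y := Nat.count (· ∈ B) t
  have hyA : y < #A := hlt.trans_le (count_le_card t)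
  have hnth : Nat.nth (· ∈ B) y < t := (h y hyA).trans_lt (Nat.nth_lt_of_lt_count hlt)
  have := Nat.count_strict_mono (nth_mem_of_lt_card (hyA.trans_le hcard)) hnth
  rw [count_nth_of_lt_card (hyA.trans_le hcard)] at this
  exact this.false

def splice (A B : Finset ℕ) (t : ℕ) : Finset ℕ := A.filter (· < t) ∪ B.filter (t ≤ ·)

variable {C D : Finset ℕ} {s t : ℕ}

@[simp]
lemma mem_splice {x : ℕ} : x ∈ splice A B t ↔ x ∈ A ∧ x < t ∨ x ∈ B ∧ t ≤ x := by
  simp [splice]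

lemma splice_self : splice A A t = A := by
  ext x
  rcases lt_or_ge x t with h | h
  · simp [h, h.not_ge]
  · simp [h, h.not_gt]

lemma splice_splice : splice (splice A B t) (splice C D t) t = splice A D t := by
  ext x
  rcases lt_or_ge x t with h | h
  · simp [h, h.not_ge]
  · simp [h, h.not_gt]

lemma count_splice_of_le (h : s ≤ t) :
    Nat.count (· ∈ splice A B t) s = Nat.count (· ∈ A) s := by
  simp only [Nat.count_eq_card_filter_range]
  congr 1
  ext x
  rcases lt_or_ge x s with hx | hx
  · simp [hx, hx.trans_le h]
  · simp [hx.not_gt]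

lemma card_splice_add_count :
    #(splice A B t) + Nat.count (· ∈ B) t = Nat.count (· ∈ A) t + #B := by
  have hdisj : Disjoint (A.filter (· < t)) (B.filter (t ≤ ·)) :=
    disjoint_left.mpr fun x h₁ h₂ => by simp only [mem_filter] at h₁ h₂; omega
  rw [splice, card_union_of_disjoint hdisj, card_filter_lt_eq_count, ← card_filter_lt_eq_count B,
    ← card_filter_add_card_filter_not (s := B) (· < t)]
  simp only [not_lt]
  ring

lemma splice_subset_range {L : ℕ} (hB : B ⊆ range L) (ht : t ≤ L) : splice A B t ⊆ range L := by
  intro x hx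
  rw [mem_range]
  rcases mem_splice.mp hx with h | h
  · omega
  · exact mem_range.mp (hB h.1)

end Finset

lemma exists_eq_of_le_of_ge {f g : ℕ → ℕ} (hf : ∀ t, f (t + 1) ≤ f t + 1) (hg : Monotone g)
    (h₀ : f 0 ≤ g 0) {N : ℕ} (hN : g N ≤ f N) : ∃ t ≤ N, f t = g t := by
  induction N with
  | zero => exact ⟨0, le_rfl, le_antisymm h₀ hN⟩
  | succ N ih =>
    by_cases h : g N ≤ f N
    · obtain ⟨t, ht, hfg⟩ := ih h
      exact ⟨t, ht.trans N.le_succ, hfg⟩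
    · have := hf N
      have : g N ≤ g (N + 1) := hg N.le_succ
      exact ⟨N + 1, le_rfl, by omega⟩

lemma Equiv.Perm.exists_lt_of_ne_one {ι : Type*} [LinearOrder ι] [WellFoundedLT ι]
    {σ : Perm ι} (hσ : σ ≠ 1) : ∃ i j, i < j ∧ σ j < σ i := by
  by_contra! h
  have hσ_mono : StrictMono σ := fun i j hij => (h i j hij).lt_of_ne (σ.injective.ne hij.ne)
  apply hσ
  ext i
  exact congrArg (· i) (Subsingleton.elim (hσ_mono.orderIsoOfSurjective σ σ.surjective) (.refl ι))

section Meeting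

variable {ι : Type*} (ℓ : ι → ℕ)

/-- Path `i` lives at the times `s ≤ ℓ i`, where it has height `H i s`. -/
def Meet (H : ι → ℕ → ℕ) (s : ℕ) (q : ι × ι) : Prop :=
  q.1 ≠ q.2 ∧ s ≤ ℓ q.1 ∧ s ≤ ℓ q.2 ∧ H q.1 s = H q.2 s

def Intersecting (H : ι → ℕ → ℕ) : Prop := ∃ s q, Meet ℓ H s q

noncomputable def firstMeetTime (H : ι → ℕ → ℕ) : ℕ := sInf {s | ∃ q, Meet ℓ H s q}

variable {ℓ} {H H' : ι → ℕ → ℕ}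

lemma exists_meet_firstMeetTime (h : Intersecting ℓ H) : ∃ q, Meet ℓ H (firstMeetTime ℓ H) q :=
  Nat.sInf_mem h

lemma not_meet_of_lt_firstMeetTime {s : ℕ} (hs : s < firstMeetTime ℓ H) (q : ι × ι) :
    ¬ Meet ℓ H s q :=
  fun hq => Nat.notMem_of_lt_sInf hs ⟨q, hq⟩

/-- Any choice works here, as long as it only depends on which paths meet at the first meeting
time. -/
noncomputable def firstMeetPair (h : Intersecting ℓ H) : ι × ι :=
  (exists_meet_firstMeetTime h).choose

lemma meet_firstMeetPair (h : Intersecting ℓ H) :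
    Meet ℓ H (firstMeetTime ℓ H) (firstMeetPair h) :=
  (exists_meet_firstMeetTime h).choose_spec

lemma apply_swap_firstMeetPair [DecidableEq ι] (h : Intersecting ℓ H) (w : ι) :
    H (swap (firstMeetPair h).1 (firstMeetPair h).2 w) (firstMeetTime ℓ H) =
      H w (firstMeetTime ℓ H) := by
  obtain ⟨-, -, -, hH⟩ := meet_firstMeetPair h
  rw [swap_apply_def]
  split_ifs with h₁ h₂ <;> simp [*]

lemma firstMeetTime_le_of_swap_apply_ne [DecidableEq ι] (h : Intersecting ℓ H) {w : ι}
    (hw : swap (firstMeetPair h).1 (firstMeetPair h).2 w ≠ w) : firstMeetTime ℓ H ≤ ℓ w := by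
  obtain ⟨-, hi, hj, -⟩ := meet_firstMeetPair h
  by_cases h₁ : w = (firstMeetPair h).1
  · rwa [h₁]
  by_cases h₂ : w = (firstMeetPair h).2
  · rwa [h₂]
  exact absurd (swap_apply_of_ne_of_ne h₁ h₂) hw

lemma firstMeet_eq_of_swap [DecidableEq ι] (h : Intersecting ℓ H)
    (hH' : ∀ w, ∀ s ≤ firstMeetTime ℓ H,
      H' w s = H (swap (firstMeetPair h).1 (firstMeetPair h).2 w) s) :
    ∃ h' : Intersecting ℓ H', firstMeetTime ℓ H' = firstMeetTime ℓ H ∧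
      firstMeetPair h' = firstMeetPair h := by
  set t := firstMeetTime ℓ H
  obtain ⟨⟨i, j⟩, hij⟩ : ∃ q, firstMeetPair h = q := ⟨_, rfl⟩
  obtain ⟨hne, hi, hj, hH⟩ : Meet ℓ H t (i, j) := hij ▸ meet_firstMeetPair h
  rw [hij] at hH'
  dsimp only at hne hi hj hH hH'
  have hH't : ∀ w, H' w t = H w t := fun w => by
    simpa [hH' w t le_rfl, hij] using apply_swap_firstMeetPair h w
  have hmeet_t : Meet ℓ H' t = Meet ℓ H t := by
    ext q
    simp only [Meet, hH't]
  have hmeet_lt : ∀ s < t, ∀ q, ¬ Meet ℓ H' s q := by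
    rintro s hs ⟨w₁, w₂⟩ ⟨hw, hw₁, hw₂, hH'w⟩
    have hℓ : ∀ w, s ≤ ℓ w → s ≤ ℓ (swap i j w) := fun w hw => by
      rw [swap_apply_def]
      split_ifs <;> omega
    refine not_meet_of_lt_firstMeetTime hs (swap i j w₁, swap i j w₂)
      ⟨(swap i j).injective.ne hw, hℓ w₁ hw₁, hℓ w₂ hw₂, ?_⟩
    rwa [← hH' w₁ s hs.le, ← hH' w₂ s hs.le]
  have htime : firstMeetTime ℓ H' = t := by
    refine IsLeast.csInf_eq ⟨?_, fun s hs => not_lt.mp fun hlt => ?_⟩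
    · exact ⟨(i, j), hmeet_t ▸ hij ▸ meet_firstMeetPair h⟩
    · obtain ⟨q, hq⟩ := hs
      exact hmeet_lt s hlt q hq
  have h' : Intersecting ℓ H' := ⟨t, (i, j), hmeet_t ▸ hij ▸ meet_firstMeetPair h⟩
  refine ⟨h', htime, ?_⟩
  unfold firstMeetPair
  congr 1
  rw [htime, hmeet_t]

end Meeting

section PathFamilies

variable {n : ℕ} (ℓ a : Fin n → ℕ)

/-- Families of lattice paths, path `i` running from `(0, σ i)` to `(ℓ i, a i - 1)` with its
up-steps at the times in `F i`; `height σ F i t` is its height at time `t`. -/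
def pathFamilies (σ : Perm (Fin n)) : Finset (Fin n → Finset ℕ) :=
  Fintype.piFinset fun i => (range (ℓ i)).powerset.filter fun T => #T + (σ i + 1) = a i

def height (σ : Perm (Fin n)) (F : Fin n → Finset ℕ) (i : Fin n) (t : ℕ) : ℕ :=
  σ i + Nat.count (· ∈ F i) t

variable {ℓ a} {σ : Perm (Fin n)} {F : Fin n → Finset ℕ}

lemma mem_pathFamilies :
    F ∈ pathFamilies ℓ a σ ↔ ∀ i, F i ⊆ range (ℓ i) ∧ #(F i) + (σ i + 1) = a i := by
  simp [pathFamilies]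

lemma card_powerset_filter_card_add_eq (L s e : ℕ) :
    #((range L).powerset.filter fun T => #T + s = e) = if s ≤ e then L.choose (e - s) else 0 := by
  split_ifs with h
  · rw [← card_range L, ← card_powersetCard, powersetCard_eq_filter, card_range]
    congr 1
    exact filter_congr fun T _ => by omega
  · exact card_eq_zero.mpr (filter_false_of_mem fun T _ => by omega)

variable (ℓ a) in
lemma det_eq_sum_sign_mul_card_pathFamilies :
    (Matrix.of fun i j : Fin n =>
        if (j : ℕ) + 1 ≤ a i then ((ℓ i).choose (a i - ((j : ℕ) + 1)) : ℤ) else 0).det =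
      ∑ σ : Perm (Fin n), (Perm.sign σ : ℤ) * #(pathFamilies ℓ a σ) := by
  rw [← Matrix.det_transpose, Matrix.det_apply]
  refine sum_congr rfl fun σ _ => ?_
  simp only [pathFamilies, Fintype.card_piFinset, card_powerset_filter_card_add_eq,
    Units.smul_def, Matrix.transpose_apply, Matrix.of_apply]
  push_cast
  rfl

lemma monotone_height (i : Fin n) : Monotone (height σ F i) :=
  fun _ _ hst => Nat.add_le_add_left (Nat.count_monotone _ hst) _

lemma height_add_one_le (i : Fin n) (t : ℕ) : height σ F i (t + 1) ≤ height σ F i t + 1 := by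
  simp only [height, Nat.count_succ]
  split_ifs <;> omega

lemma height_lt_height_of_not_intersecting (hℓ : Monotone ℓ)
    (hF : ¬ Intersecting ℓ (height σ F)) {i j : Fin n} (hij : i < j) (hσ : σ i ≤ σ j) {t : ℕ}
    (ht : t ≤ ℓ i) : height σ F i t < height σ F j t := by
  by_contra! hle
  obtain ⟨s, hs, hmeet⟩ := exists_eq_of_le_of_ge (height_add_one_le i) (monotone_height j)
    (by simpa [height] using hσ) hle
  exact hF ⟨s, (i, j), hij.ne, hs.trans ht, (hs.trans ht).trans (hℓ hij.le), hmeet⟩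

lemma intersecting_of_ne_one (hℓ : Monotone ℓ) (ha : ∀ i j, i ≤ j → a i + ℓ j ≤ a j + ℓ i)
    (hσ : σ ≠ 1) (hF : F ∈ pathFamilies ℓ a σ) : Intersecting ℓ (height σ F) := by
  obtain ⟨i, j, hij, hσij⟩ := Perm.exists_lt_of_ne_one hσ
  rw [mem_pathFamilies] at hF
  have hstart : height σ F j 0 ≤ height σ F i 0 := by simpa [height] using hσij.le
  have hend : height σ F i (ℓ i) ≤ height σ F j (ℓ i) := by
    have hcount_i := count_mem_eq_card fun x hx => mem_range.mp ((hF i).1 hx)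
    have hcount_j := card_le_count_mem_add (hF j).1 (ℓ i)
    have := ha i j hij.le
    have := hℓ hij.le
    have := (hF i).2
    have := (hF j).2
    simp only [height, hcount_i]
    omega
  obtain ⟨t, ht, hmeet⟩ :=
    exists_eq_of_le_of_ge (height_add_one_le j) (monotone_height i) hstart hend
  exact ⟨t, (i, j), hij.ne, ht, ht.trans (hℓ hij.le), hmeet.symm⟩

noncomputable def swapAtFirstMeet (σ : Perm (Fin n)) (F : Fin n → Finset ℕ)
    (h : Intersecting ℓ (height σ F)) : Perm (Fin n) × (Fin n → Finset ℕ) :=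
  let τ := swap (firstMeetPair h).1 (firstMeetPair h).2
  (σ * τ, fun w => splice (F (τ w)) (F w) (firstMeetTime ℓ (height σ F)))

lemma height_swapAtFirstMeet (h : Intersecting ℓ (height σ F)) (w : Fin n) {s : ℕ}
    (hs : s ≤ firstMeetTime ℓ (height σ F)) :
    height (swapAtFirstMeet σ F h).1 (swapAtFirstMeet σ F h).2 w s =
      height σ F (swap (firstMeetPair h).1 (firstMeetPair h).2 w) s := by
  simp only [height]
  rw [← count_splice_of_le (A := F (swap (firstMeetPair h).1 (firstMeetPair h).2 w)) (B := F w) hs]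
  rfl

lemma swapAtFirstMeet_mem (hF : F ∈ pathFamilies ℓ a σ) (h : Intersecting ℓ (height σ F)) :
    (swapAtFirstMeet σ F h).2 ∈ pathFamilies ℓ a (swapAtFirstMeet σ F h).1 := by
  rw [mem_pathFamilies] at hF ⊢
  intro w
  have hheight := apply_swap_firstMeetPair h w
  simp only [height] at hheight
  set τ := swap (firstMeetPair h).1 (firstMeetPair h).2
  set t := firstMeetTime ℓ (height σ F)
  refine ⟨?_, ?_⟩
  · change splice (F (τ w)) (F w) t ⊆ range (ℓ w)
    by_cases hw : τ w = w
    · rw [hw, splice_self]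
      exact (hF w).1
    · exact splice_subset_range (hF w).1 (firstMeetTime_le_of_swap_apply_ne h hw)
  · change #(splice (F (τ w)) (F w) t) + ((σ * τ) w + 1) = a w
    have hcard := card_splice_add_count (A := F (τ w)) (B := F w) (t := t)
    have := (hF w).2
    rw [Perm.coe_mul, Function.comp_apply]
    omega

lemma sign_swapAtFirstMeet (h : Intersecting ℓ (height σ F)) :
    Perm.sign (swapAtFirstMeet σ F h).1 = - Perm.sign σ := by
  simp [swapAtFirstMeet, Perm.sign_mul, Perm.sign_swap (meet_firstMeetPair h).1]

lemma swapAtFirstMeet_swapAtFirstMeet (h : Intersecting ℓ (height σ F)) :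
    ∃ h' : Intersecting ℓ (height (swapAtFirstMeet σ F h).1 (swapAtFirstMeet σ F h).2),
      swapAtFirstMeet _ _ h' = (σ, F) := by
  obtain ⟨h', htime, hpair⟩ :=
    firstMeet_eq_of_swap (H' := height (swapAtFirstMeet σ F h).1 (swapAtFirstMeet σ F h).2) h
      fun w s hs => height_swapAtFirstMeet h w hs
  refine ⟨h', ?_⟩
  rw [swapAtFirstMeet, hpair, htime]
  refine Prod.ext ?_ (funext fun w => ?_)
  · simp [swapAtFirstMeet, mul_assoc]
  · simp [swapAtFirstMeet, splice_splice, splice_self]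

open scoped Classical in
lemma sum_sign_mul_card_intersecting_eq_zero :
    ∑ σ : Perm (Fin n), (Perm.sign σ : ℤ) *
      #((pathFamilies ℓ a σ).filter fun F => Intersecting ℓ (height σ F)) = 0 := by
  set P := fun σ : Perm (Fin n) => (pathFamilies ℓ a σ).filter fun F => Intersecting ℓ (height σ F)
  have hP {σ F} : F ∈ P σ ↔ F ∈ pathFamilies ℓ a σ ∧ Intersecting ℓ (height σ F) := mem_filter
  calc ∑ σ, (Perm.sign σ : ℤ) * #(P σ) = ∑ x ∈ univ.sigma P, (Perm.sign x.1 : ℤ) := by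
        rw [sum_sigma]
        simp [mul_comm]
    _ = 0 := by
      have hP' {x} (hx : x ∈ univ.sigma P) : Intersecting ℓ (height x.1 x.2) :=
        (hP.mp (mem_sigma.mp hx).2).2
      refine sum_involution (fun x hx => ⟨(swapAtFirstMeet x.1 x.2 (hP' hx)).1,
          (swapAtFirstMeet x.1 x.2 (hP' hx)).2⟩) (fun x hx => ?_) (fun x hx _ heq => ?_)
        (fun x hx => ?_) (fun x hx => ?_)
      · rw [sign_swapAtFirstMeet]
        push_cast
        ring
      · have hsign := sign_swapAtFirstMeet (hP' hx)
        rw [show (swapAtFirstMeet x.1 x.2 (hP' hx)).1 = x.1 from congrArg Sigma.fst heq] at hsign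
        exact units_ne_neg_self _ hsign
      · obtain ⟨h', -⟩ := swapAtFirstMeet_swapAtFirstMeet (hP' hx)
        exact mem_sigma.mpr ⟨mem_univ _,
          hP.mpr ⟨swapAtFirstMeet_mem (hP.mp (mem_sigma.mp hx).2).1 (hP' hx), h'⟩⟩
      · obtain ⟨h', he⟩ := swapAtFirstMeet_swapAtFirstMeet (hP' hx)
        simp only [he]

variable (ℓ a) in
open scoped Classical in
noncomputable def nonintersectingFamilies : Finset (Fin n → Finset ℕ) :=
  (pathFamilies ℓ a 1).filter fun F => ¬ Intersecting ℓ (height 1 F)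

lemma mem_nonintersectingFamilies :
    F ∈ nonintersectingFamilies ℓ a ↔ F ∈ pathFamilies ℓ a 1 ∧ ¬ Intersecting ℓ (height 1 F) := by
  classical
  simp [nonintersectingFamilies]

/-- The Lindström–Gessel–Viennot lemma for these path families. -/
theorem det_eq_card_nonintersecting (hℓ : Monotone ℓ)
    (ha : ∀ i j, i ≤ j → a i + ℓ j ≤ a j + ℓ i) :
    (Matrix.of fun i j : Fin n =>
        if (j : ℕ) + 1 ≤ a i then ((ℓ i).choose (a i - ((j : ℕ) + 1)) : ℤ) else 0).det =
      #(nonintersectingFamilies ℓ a) := by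
  classical
  rw [nonintersectingFamilies, det_eq_sum_sign_mul_card_pathFamilies]
  have hsplit (σ : Perm (Fin n)) : (#(pathFamilies ℓ a σ) : ℤ) =
      #((pathFamilies ℓ a σ).filter fun F => Intersecting ℓ (height σ F)) +
        #((pathFamilies ℓ a σ).filter fun F => ¬ Intersecting ℓ (height σ F)) := by
    exact_mod_cast (card_filter_add_card_filter_not _).symm
  simp_rw [hsplit, mul_add, sum_add_distrib, sum_sign_mul_card_intersecting_eq_zero, zero_add]
  rw [sum_eq_single 1 (fun σ _ hσ => ?_) (by simp)]
  · simp
  · rw [card_eq_zero.mpr (filter_false_of_mem fun F hF => not_not.mpr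
      (intersecting_of_ne_one hℓ ha hσ hF))]
    simp

end PathFamilies

def IsStrictTableau (c : Finset (ℕ × ℕ)) (m : ℕ) (f : ℕ × ℕ → ℕ) : Prop :=
  (∀ u, u ∉ c → f u = 0) ∧ (∀ u ∈ c, 1 ≤ f u ∧ f u ≤ m) ∧
    (∀ x y, (x, y) ∈ c → (x, y + 1) ∈ c → f (x, y) < f (x, y + 1)) ∧
    (∀ x y, (x, y) ∈ c → (x + 1, y) ∈ c → f (x, y) < f (x + 1, y))

namespace IsStrictTableau

variable {c : Finset (ℕ × ℕ)} {m : ℕ} {f : ℕ × ℕ → ℕ}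

lemma apply_lt_apply_of_lt_snd (hf : IsStrictTableau c m f) (hc : IsLowerSet (c : Set (ℕ × ℕ)))
    {x y y' : ℕ} (hy : y < y') (hmem : (x, y') ∈ c) : f (x, y) < f (x, y') := by
  induction y', hy using Nat.le_induction with
  | base => exact hf.2.2.1 x y (hc (Prod.mk_le_mk.mpr ⟨le_rfl, y.le_succ⟩) hmem) hmem
  | succ y' _ ih =>
    have hmem' : (x, y') ∈ c := hc (Prod.mk_le_mk.mpr ⟨le_rfl, y'.le_succ⟩) hmem
    exact (ih hmem').trans (hf.2.2.1 x y' hmem' hmem)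

lemma apply_add_sub_le_of_le_fst (hf : IsStrictTableau c m f)
    (hc : IsLowerSet (c : Set (ℕ × ℕ))) {x x' y : ℕ} (hx : x ≤ x') (hmem : (x', y) ∈ c) :
    f (x, y) + (x' - x) ≤ f (x', y) := by
  induction x', hx using Nat.le_induction with
  | base => simp
  | succ x' _ ih =>
    have hmem' : (x', y) ∈ c := hc (Prod.mk_le_mk.mpr ⟨x'.le_succ, le_rfl⟩) hmem
    have := hf.2.2.2 x' y hmem' hmem
    have := ih hmem'
    omega

lemma lt_apply (hf : IsStrictTableau c m f) (hc : IsLowerSet (c : Set (ℕ × ℕ))) {x y : ℕ}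
    (hmem : (x, y) ∈ c) : x < f (x, y) := by
  have := (hf.2.1 _ (hc (Prod.mk_le_mk.mpr ⟨x.zero_le, le_rfl⟩) hmem)).1
  have := hf.apply_add_sub_le_of_le_fst hc x.zero_le hmem
  omega

end IsStrictTableau

lemma StrictMono.apply_add_sub_le {n : ℕ} {a : Fin n → ℕ} (ha : StrictMono a) {i j : Fin n}
    (hij : i ≤ j) : a i + (j - i) ≤ a j := by
  have hcard := card_le_card_of_injOn a (s := Ioc i j) (t := Ioc (a i) (a j))
    (fun k hk => by
      simp only [coe_Ioc, Set.mem_Ioc] at hk ⊢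
      exact ⟨ha hk.1, ha.monotone hk.2⟩) ha.injective.injOn
  rw [Fin.card_Ioc, Nat.card_Ioc] at hcard
  have := ha.monotone hij
  omega

lemma Fin.exists_rev_eq {n x : ℕ} (hx : x < n) : ∃ i : Fin n, (i.rev : ℕ) = x :=
  ⟨Fin.rev ⟨x, hx⟩, by rw [Fin.rev_rev]⟩

section Cells

variable {n : ℕ} {a : Fin n → ℕ}

lemma fst_lt_of_mem_cellsOf {u : ℕ × ℕ} (h : u ∈ cellsOf n a) : u.1 < n :=
  mem_range.mp (mem_product.mp (mem_filter.mp h).1).1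

lemma exists_rev_eq_of_mem_cellsOf {x y : ℕ} (h : (x, y) ∈ cellsOf n a) :
    ∃ i : Fin n, (i.rev : ℕ) = x :=
  Fin.exists_rev_eq (fst_lt_of_mem_cellsOf h)

lemma rev_mem_cellsOf_iff (ha_le : ∀ i : Fin n, a i ≤ 2 * (i : ℕ) + 1) (i : Fin n) {y : ℕ} :
    ((i.rev : ℕ), y) ∈ cellsOf n a ↔ y + i + 1 < a i := by
  have hrev := Fin.val_rev i
  have hk : n - 1 - (i.rev : ℕ) = i := by omega
  have hext : extSeq n a (n - 1 - i.rev) = a i := by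
    rw [hk, extSeq, dif_pos i.isLt]
  have := ha_le i
  simp only [cellsOf, mem_filter, mem_product, mem_range, hext]
  omega

lemma isLowerSet_cellsOf (ha : StrictMono a) (ha_le : ∀ i : Fin n, a i ≤ 2 * (i : ℕ) + 1) :
    IsLowerSet (cellsOf n a : Set (ℕ × ℕ)) := by
  rintro ⟨x, y⟩ ⟨x', y'⟩ hle hmem
  obtain ⟨hx, hy⟩ := Prod.mk_le_mk.mp hle
  obtain ⟨i, rfl⟩ := exists_rev_eq_of_mem_cellsOf hmem
  obtain ⟨j, rfl⟩ := Fin.exists_rev_eq (hx.trans_lt (i.rev.isLt))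
  have hij : i ≤ j := by
    rw [Fin.le_def]
    have := Fin.val_rev i
    have := Fin.val_rev j
    omega
  have := ha.apply_add_sub_le hij
  have := (rev_mem_cellsOf_iff ha_le i).mp hmem
  rw [mem_coe, rev_mem_cellsOf_iff ha_le j]
  have := Fin.val_rev i
  have := Fin.val_rev j
  omega

end Cells

section TableauxAndPaths

variable {n p : ℕ} {a : Fin n → ℕ} {f : ℕ × ℕ → ℕ} {F : Fin n → Finset ℕ}

variable (a) in
/-- Row `i.rev` of a tableau, with entries lowered by `i.rev + 1`: the up-steps of path `i`. -/
def rowSets (f : ℕ × ℕ → ℕ) (i : Fin n) : Finset ℕ :=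
  (range (a i - (i + 1))).image fun y => f (i.rev, y) - (i.rev + 1)

variable (a) in
noncomputable def tableauOfPaths (F : Fin n → Finset ℕ) (u : ℕ × ℕ) : ℕ :=
  if h : u ∈ cellsOf n a then
    Nat.nth (· ∈ F (Fin.rev ⟨u.1, fst_lt_of_mem_cellsOf h⟩)) u.2 + (u.1 + 1)
  else 0

lemma tableauOfPaths_rev {i : Fin n} {y : ℕ} (h : ((i.rev : ℕ), y) ∈ cellsOf n a) :
    tableauOfPaths a F (i.rev, y) = Nat.nth (· ∈ F i) y + (i.rev + 1) := by
  rw [tableauOfPaths, dif_pos h]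
  simp only [Fin.eta, Fin.rev_rev]

lemma val_add_one_le (ha : StrictMono a) (ha_pos : ∀ i, 1 ≤ a i) (i : Fin n) :
    (i : ℕ) + 1 ≤ a i := by
  have hgap := ha.apply_add_sub_le (Fin.le_def.mpr (Nat.zero_le i) : (⟨0, i.pos⟩ : Fin n) ≤ i)
  have := ha_pos ⟨0, i.pos⟩
  simp only [Nat.sub_zero] at hgap
  omega

section RowSets

variable (ha : StrictMono a) (ha_le : ∀ i : Fin n, a i ≤ 2 * (i : ℕ) + 1)
  (hf : IsStrictTableau (cellsOf n a) (p + n - 1) f)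
include ha ha_le hf

lemma strictMonoOn_row (i : Fin n) :
    StrictMonoOn (fun y => f (i.rev, y) - (i.rev + 1)) (Set.Iio (a i - (i + 1))) := by
  intro y hy z hz hyz
  simp only [Set.mem_Iio] at hy hz
  have hc := isLowerSet_cellsOf ha ha_le
  have hmem_y : ((i.rev : ℕ), y) ∈ cellsOf n a := (rev_mem_cellsOf_iff ha_le i).mpr (by omega)
  have hmem_z : ((i.rev : ℕ), z) ∈ cellsOf n a := (rev_mem_cellsOf_iff ha_le i).mpr (by omega)
  have := hf.apply_lt_apply_of_lt_snd hc hyz hmem_z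
  have := hf.lt_apply hc hmem_y
  dsimp only
  omega

lemma card_rowSets (i : Fin n) : #(rowSets a f i) = a i - (i + 1) := by
  rw [rowSets, card_image_of_injOn (by simpa only [coe_range] using
    (strictMonoOn_row ha ha_le hf i).injOn), card_range]

lemma nth_rowSets {i : Fin n} {y : ℕ} (hy : y < a i - (i + 1)) :
    Nat.nth (· ∈ rowSets a f i) y = f (i.rev, y) - (i.rev + 1) :=
  nth_image_range (strictMonoOn_row ha ha_le hf i) hy

lemma count_rowSets_le_count_rowSets {i j : Fin n} (hij : i ≤ j) (t : ℕ) :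
    Nat.count (· ∈ rowSets a f i) t ≤ Nat.count (· ∈ rowSets a f j) t := by
  have hgap := ha.apply_add_sub_le hij
  refine count_le_count_of_nth_le_nth ?_ (fun y hy => ?_) t
  · rw [card_rowSets ha ha_le hf, card_rowSets ha ha_le hf]
    omega
  rw [card_rowSets ha ha_le hf] at hy
  rw [nth_rowSets ha ha_le hf hy, nth_rowSets ha ha_le hf (by omega)]
  have hmem : ((i.rev : ℕ), y) ∈ cellsOf n a := (rev_mem_cellsOf_iff ha_le i).mpr (by omega)
  have hrev : (j.rev : ℕ) ≤ i.rev := Fin.rev_le_rev.mpr hij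
  have := hf.apply_add_sub_le_of_le_fst (isLowerSet_cellsOf ha ha_le) hrev hmem
  have := hf.lt_apply (isLowerSet_cellsOf ha ha_le) hmem
  omega

end RowSets

lemma rowSets_mem_nonintersectingFamilies (ha : StrictMono a) (ha_pos : ∀ i, 1 ≤ a i)
    (ha_le : ∀ i : Fin n, a i ≤ 2 * (i : ℕ) + 1)
    (hf : IsStrictTableau (cellsOf n a) (p + n - 1) f) :
    rowSets a f ∈ nonintersectingFamilies (fun i : Fin n => p + i) a := by
  refine mem_nonintersectingFamilies.mpr ⟨mem_pathFamilies.mpr fun i => ⟨?_, ?_⟩, ?_⟩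
  · intro x hx
    obtain ⟨y, hy, rfl⟩ := mem_image.mp hx
    have hy := mem_range.mp hy
    have hmem : ((i.rev : ℕ), y) ∈ cellsOf n a := (rev_mem_cellsOf_iff ha_le i).mpr (by omega)
    have := (hf.2.1 _ hmem).2
    have := ha_le i
    have := Fin.val_rev i
    rw [mem_range]
    omega
  · rw [card_rowSets ha ha_le hf, Perm.one_apply]
    have := val_add_one_le ha ha_pos i
    omega
  · rintro ⟨s, ⟨i, j⟩, hij, -, -, hmeet⟩
    have key {i j : Fin n} (hij : i < j) :
        height 1 (rowSets a f) i s < height 1 (rowSets a f) j s := by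
      have := count_rowSets_le_count_rowSets ha ha_le hf hij.le s
      simp only [height, Perm.one_apply]
      have : (i : ℕ) < j := hij
      omega
    rcases lt_or_gt_of_ne hij with h | h
    · exact (key h).ne hmeet
    · exact (key h).ne' hmeet

lemma isStrictTableau_tableauOfPaths (ha_le : ∀ i : Fin n, a i ≤ 2 * (i : ℕ) + 1)
    (hF : F ∈ nonintersectingFamilies (fun i : Fin n => p + i) a) :
    IsStrictTableau (cellsOf n a) (p + n - 1) (tableauOfPaths a F) := by
  obtain ⟨hF, hF_ni⟩ := mem_nonintersectingFamilies.mp hF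
  have hrow (i : Fin n) : F i ⊆ range (p + i) := ((mem_pathFamilies.mp hF) i).1
  have hcard (i : Fin n) : #(F i) + (i + 1) = a i := ((mem_pathFamilies.mp hF) i).2
  refine ⟨fun u hu => dif_neg hu, ?_, ?_, ?_⟩
  · rintro ⟨x, y⟩ hu
    obtain ⟨i, rfl⟩ := exists_rev_eq_of_mem_cellsOf hu
    have hy : y < #(F i) := by have := (rev_mem_cellsOf_iff ha_le i).mp hu; have := hcard i; omega
    have := mem_range.mp (hrow i (nth_mem_of_lt_card hy))
    have := Fin.val_rev i
    rw [tableauOfPaths_rev hu]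
    omega
  · intro x y hu hu'
    obtain ⟨i, rfl⟩ := exists_rev_eq_of_mem_cellsOf hu
    have hy : y + 1 < #(F i) := by
      have := (rev_mem_cellsOf_iff ha_le i).mp hu'; have := hcard i; omega
    rw [tableauOfPaths_rev hu, tableauOfPaths_rev hu']
    exact Nat.add_lt_add_right (nth_lt_nth_of_lt_card y.lt_succ_self hy) _
  · intro x y hu hu'
    obtain ⟨j, rfl⟩ := exists_rev_eq_of_mem_cellsOf hu
    obtain ⟨i, hi⟩ := exists_rev_eq_of_mem_cellsOf hu'
    have hij : (j : ℕ) = i + 1 := by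
      have := Fin.val_rev i
      have := Fin.val_rev j
      omega
    have hy : y < #(F i) := by
      have := (rev_mem_cellsOf_iff ha_le i).mp (hi ▸ hu'); have := hcard i; omega
    -- Path `j = i + 1` starts one above path `i` and never meets it, so it stays above it.
    have hcount : ∀ t ≤ p + i, Nat.count (· ∈ F i) t ≤ Nat.count (· ∈ F j) t := fun t ht => by
      have := height_lt_height_of_not_intersecting (fun _ _ h => Nat.add_le_add_left h p) hF_ni
        (Fin.lt_def.mpr (by omega : (i : ℕ) < j)) (by simp [Fin.le_def, hij]) ht
      simp only [height, Perm.one_apply] at this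
      omega
    have := nth_le_nth_of_count_le (hrow i) hcount hy
    rw [tableauOfPaths_rev hu, ← hi, tableauOfPaths_rev (hi ▸ hu')]
    omega

lemma rowSets_tableauOfPaths (ha_le : ∀ i : Fin n, a i ≤ 2 * (i : ℕ) + 1)
    (hF : F ∈ pathFamilies (fun i : Fin n => p + i) a 1) :
    rowSets a (tableauOfPaths a F) = F := by
  funext i
  have hcard : a i - (i + 1) = #(F i) := by
    have := ((mem_pathFamilies.mp hF) i).2
    rw [Perm.one_apply] at this
    omega
  rw [rowSets, hcard]
  conv_rhs => rw [← image_nth_range_card (A := F i)]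
  refine image_congr fun y hy => ?_
  have hmem : ((i.rev : ℕ), y) ∈ cellsOf n a :=
    (rev_mem_cellsOf_iff ha_le i).mpr (by have := mem_range.mp hy; omega)
  rw [tableauOfPaths_rev hmem, Nat.add_sub_cancel]

lemma tableauOfPaths_rowSets (ha : StrictMono a) (ha_le : ∀ i : Fin n, a i ≤ 2 * (i : ℕ) + 1)
    (hf : IsStrictTableau (cellsOf n a) (p + n - 1) f) : tableauOfPaths a (rowSets a f) = f := by
  funext ⟨x, y⟩
  by_cases hu : (x, y) ∈ cellsOf n a
  · obtain ⟨i, rfl⟩ := exists_rev_eq_of_mem_cellsOf hu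
    have hy : y < a i - (i + 1) := by have := (rev_mem_cellsOf_iff ha_le i).mp hu; omega
    rw [tableauOfPaths_rev hu, nth_rowSets ha ha_le hf hy]
    have := hf.lt_apply (isLowerSet_cellsOf ha ha_le) hu
    omega
  · rw [tableauOfPaths, dif_neg hu, hf.1 _ hu]

variable (p) in
noncomputable def tableauEquiv (ha : StrictMono a) (ha_pos : ∀ i, 1 ≤ a i)
    (ha_le : ∀ i : Fin n, a i ≤ 2 * (i : ℕ) + 1) :
    {f // IsStrictTableau (cellsOf n a) (p + n - 1) f} ≃
      nonintersectingFamilies (fun i : Fin n => p + i) a where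
  toFun f := ⟨rowSets a f, rowSets_mem_nonintersectingFamilies ha ha_pos ha_le f.2⟩
  invFun F := ⟨tableauOfPaths a F, isStrictTableau_tableauOfPaths ha_le F.2⟩
  left_inv f := Subtype.ext (tableauOfPaths_rowSets ha ha_le f.2)
  right_inv F := Subtype.ext (rowSets_tableauOfPaths ha_le (mem_nonintersectingFamilies.mp F.2).1)

lemma isStrictTableau_add (ha_le : ∀ i : Fin n, a i ≤ 2 * (i : ℕ) + 1) :
    IsStrictTableau (cellsOf n a) (p + n - 1)
      fun u => if u ∈ cellsOf n a then u.1 + u.2 + 1 else 0 := by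
  refine ⟨fun u hu => if_neg hu, ?_, fun x y hu hu' => ?_, fun x y hu hu' => ?_⟩
  · rintro ⟨x, y⟩ hu
    obtain ⟨i, rfl⟩ := exists_rev_eq_of_mem_cellsOf hu
    have := (rev_mem_cellsOf_iff ha_le i).mp hu
    have := ha_le i
    have := Fin.val_rev i
    simp only [if_pos hu]
    omega
  · simp only [if_pos hu, if_pos hu']
    omega
  · simp only [if_pos hu, if_pos hu']
    omega

end TableauxAndPaths

/-- For `a₁ < ⋯ < aₙ` positive with `aᵢ ≤ 2i-1` and `p ≥ 0`, the determinant
`det(binom(p+i-1, aᵢ-j))` equals the number of fillings of `Y(a)` with entries in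
`{1, …, p+n-1}` strictly increasing along rows and columns, and is strictly positive. -/
theorem det_counts_strict_tableaux (n : ℕ) (a : Fin n → ℕ) (ha : StrictMono a)
    (h1 : ∀ i, 1 ≤ a i) (h2 : ∀ i : Fin n, a i ≤ 2 * (i : ℕ) + 1) (p : ℕ) :
    Matrix.det (Matrix.of fun i j : Fin n =>
        if (j : ℕ) + 1 ≤ a i then ((p + (i : ℕ)).choose (a i - ((j : ℕ) + 1)) : ℤ)
        else 0) =
      (Nat.card {f : ℕ × ℕ → ℕ //
        (∀ u, u ∉ cellsOf n a → f u = 0) ∧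
        (∀ u ∈ cellsOf n a, 1 ≤ f u ∧ f u ≤ p + n - 1) ∧
        (∀ x y, (x, y) ∈ cellsOf n a → (x, y + 1) ∈ cellsOf n a → f (x, y) < f (x, y + 1)) ∧
        (∀ x y, (x, y) ∈ cellsOf n a → (x + 1, y) ∈ cellsOf n a → f (x, y) < f (x + 1, y))} : ℤ) ∧
    0 < Matrix.det (Matrix.of fun i j : Fin n =>
        if (j : ℕ) + 1 ≤ a i then ((p + (i : ℕ)).choose (a i - ((j : ℕ) + 1)) : ℤ)
        else 0) := by
  have hdet := det_eq_card_nonintersecting (ℓ := fun i : Fin n => p + i) (a := a)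
    (fun _ _ h => Nat.add_le_add_left h p)
    (fun i j hij => by have := ha.apply_add_sub_le hij; have : (i : ℕ) ≤ j := hij; omega)
  have hcard := (Nat.card_congr (tableauEquiv p ha h1 h2)).trans (Nat.card_eq_finsetCard _)
  refine ⟨by rw [hdet]; exact congrArg Nat.cast hcard.symm, ?_⟩
  rw [hdet]
  exact_mod_cast card_pos.mpr ⟨_, (tableauEquiv p ha h1 h2 ⟨_, isStrictTableau_add h2⟩).2⟩
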